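/- Let R_1 = Σ r'_n X^n ∈ F_2[[X]], where r'_0 = 0 and r'_n = r_n for n ≥ 1 (so R_1 = R + 1). The composition inverse U of R_1 satisfies (X^2 + 1)U^5 + (X^2 + X)U^4 + U^3 + (X^2 + 1)U + X^2 + X = 0. -/

import Mathlib

/-!
Over `𝔽₂` we have `R² = R(X²)`, so `(1 + X) R²` is the series `∑ r_{⌊n/2⌋} Xⁿ`, and the
recurrences say exactly that `r_n + r_{⌊n/2⌋}` is the indicator of `n ≡ 3 (mod 4)`. Hence
`R + (1 + X) R² = X³ / (1 + X⁴)`; multiplying by `(1 + X)⁴ = 1 + X⁴` gives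
`(1 + X)⁵ R² + (1 + X)⁴ R + X³ = 0`. Substituting `U`, which sends `R = R₁ + 1` to `X + 1`,
and expanding in characteristic `2` gives the equation for `U`.
-/

open PowerSeries

/-- Composition `f(g(X))` of formal power series (meaningful when the
constant coefficient of `g` is zero). -/
noncomputable def PowerSeries.comp {R : Type*} [CommRing R]
    (f g : PowerSeries R) : PowerSeries R :=
  PowerSeries.mk fun n =>
    ∑ k ∈ Finset.range (n + 1), PowerSeries.coeff k f * PowerSeries.coeff n (g ^ k)

theorem CharTwo.add_pow_four {A : Type*} [CommRing A] [CharP A 2] (x y : A) :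
    (x + y) ^ 4 = x ^ 4 + y ^ 4 :=
  add_pow_char_pow x y 2 2

namespace PowerSeries

section CommRing

variable {R : Type*} [CommRing R]

instance instCharP (p : ℕ) [CharP R p] : CharP R⟦X⟧ p :=
  charP_of_injective_algebraMap C_injective p

theorem coeff_pow_eq_zero_of_lt {g : R⟦X⟧} (hg : constantCoeff g = 0) {n k : ℕ} (h : n < k) :
    coeff n (g ^ k) = 0 :=
  coeff_of_lt_order _ <| (Nat.cast_lt.mpr h).trans_le <| le_order_pow_of_constantCoeff_eq_zero k hg

theorem comp_eq_subst (f : R⟦X⟧) {g : R⟦X⟧} (hg : constantCoeff g = 0) : f.comp g = f.subst g := by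
  ext n
  rw [coeff_subst' (HasSubst.of_constantCoeff_zero' hg), comp, coeff_mk]
  refine (finsum_eq_sum_of_support_subset _ fun k hk => ?_).symm
  simp only [Function.mem_support, Finset.coe_range, Set.mem_Iio] at hk ⊢
  by_contra! hnk
  exact hk (by rw [coeff_pow_eq_zero_of_lt hg (by omega), mul_zero])

theorem coeff_one_add_X_mul_expand_two (f : R⟦X⟧) (n : ℕ) :
    coeff n ((1 + X) * expand 2 two_ne_zero f) = coeff (n / 2) f := by
  rw [add_mul, one_mul, map_add]
  rcases n with _ | n
  · simp [coeff_expand]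
  · rw [coeff_succ_X_mul, coeff_expand, coeff_expand]
    rcases Nat.even_or_odd' n with ⟨k, rfl | rfl⟩
    · rw [if_neg (by omega), if_pos (dvd_mul_right 2 k), zero_add, show (2 * k + 1) / 2 = k by omega,
        Nat.mul_div_cancel_left k two_pos]
    · rw [if_pos ⟨k + 1, by ring⟩, if_neg (by omega), add_zero, show (2 * k + 1 + 1) / 2 = k + 1 by omega]

theorem one_sub_X_pow_four_mul_mk_mod_four_eq_three :
    (1 - X ^ 4) * mk (fun n => if n % 4 = 3 then (1 : R) else 0) = X ^ 3 := by
  ext n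
  rw [sub_mul, one_mul, map_sub, coeff_X_pow_mul', coeff_mk, coeff_X_pow]
  by_cases h4 : 4 ≤ n
  · rw [if_pos h4, coeff_mk, show (n - 4) % 4 = n % 4 by omega, sub_self, if_neg (by omega)]
  · rw [if_neg h4, sub_zero]
    interval_cases n <;> simp

end CommRing

theorem pow_char_eq_expand {p : ℕ} [Fact p.Prime] (f : (ZMod p)⟦X⟧) :
    f ^ p = expand p (NeZero.ne p) f := by
  ext n
  have htrunc : coeff n (f ^ p) = ((trunc (n + 1) f) ^ p).coeff n := by
    rw [← coeff_coe_trunc_of_lt n.lt_succ_self, ← trunc_trunc_pow,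
      coeff_coe_trunc_of_lt n.lt_succ_self, ← Polynomial.coe_pow, Polynomial.coeff_coe]
  rw [coeff_expand, htrunc, ← ZMod.expand_card, Polynomial.coeff_expand (NeZero.pos p)]
  split_ifs
  · rw [coeff_trunc, if_pos (Nat.lt_succ_of_le (Nat.div_le_self n p))]
  · rfl

end PowerSeries

theorem rudinShapiro_add_apply_div_two {r : ℕ → ZMod 2} (h2 : ∀ n, r (2 * n) = r n)
    (h41 : ∀ n, r (4 * n + 1) = r n) (h43 : ∀ n, r (4 * n + 3) = 1 + r (2 * n + 1)) (n : ℕ) :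
    r n + r (n / 2) = if n % 4 = 3 then 1 else 0 := by
  obtain ⟨q, j, hj, rfl⟩ : ∃ q j, j < 4 ∧ n = 4 * q + j :=
    ⟨n / 4, n % 4, Nat.mod_lt n four_pos, (Nat.div_add_mod n 4).symm⟩
  interval_cases j
  · rw [show 4 * q + 0 = 2 * (2 * q) by ring, h2, Nat.mul_div_cancel_left _ two_pos, if_neg (by omega),
      CharTwo.add_self_eq_zero]
  · rw [h41, show (4 * q + 1) / 2 = 2 * q by omega, h2, if_neg (by omega), CharTwo.add_self_eq_zero]
  · rw [show 4 * q + 2 = 2 * (2 * q + 1) by ring, h2, Nat.mul_div_cancel_left _ two_pos, if_neg (by omega),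
      CharTwo.add_self_eq_zero]
  · rw [h43, show (4 * q + 3) / 2 = 2 * q + 1 by omega, if_pos (by omega), add_assoc,
      CharTwo.add_self_eq_zero, add_zero]

theorem rudinShapiro_functional_equation {r : ℕ → ZMod 2} (h2 : ∀ n, r (2 * n) = r n)
    (h41 : ∀ n, r (4 * n + 1) = r n) (h43 : ∀ n, r (4 * n + 3) = 1 + r (2 * n + 1)) :
    (1 + X) ^ 5 * (mk r) ^ 2 + (1 + X) ^ 4 * mk r + X ^ 3 = 0 := by
  have hD : mk r + (1 + X) * (mk r) ^ 2 = mk (fun n => if n % 4 = 3 then 1 else 0) := by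
    ext n
    rw [map_add, pow_char_eq_expand, coeff_one_add_X_mul_expand_two, coeff_mk, coeff_mk, coeff_mk,
      rudinShapiro_add_apply_div_two h2 h41 h43]
  calc (1 + X) ^ 5 * (mk r) ^ 2 + (1 + X) ^ 4 * mk r + X ^ 3
      = (1 + X) ^ 4 * (mk r + (1 + X) * (mk r) ^ 2) + X ^ 3 := by ring
    _ = (1 - X ^ 4) * mk (fun n => if n % 4 = 3 then 1 else 0) + X ^ 3 := by
      rw [hD, CharTwo.add_pow_four, CharTwo.sub_eq_add, one_pow]
    _ = 0 := by rw [one_sub_X_pow_four_mul_mk_mod_four_eq_three, CharTwo.add_self_eq_zero]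

theorem rudin_shapiro_prime_inverse_equation_general
    (r : ℕ → ZMod 2)
    (h2 : ∀ n, r (2 * n) = r n)
    (h41 : ∀ n, r (4 * n + 1) = r n)
    (h43 : ∀ n, r (4 * n + 3) = 1 + r (2 * n + 1))
    (R R₁ U : PowerSeries (ZMod 2))
    (hR : R = PowerSeries.mk r) (hR1 : R₁ = R + 1)
    (hU0 : PowerSeries.constantCoeff U = 0)
    (hRU : PowerSeries.comp R₁ U = PowerSeries.X) :
    (PowerSeries.X ^ 2 + 1) * U ^ 5 + (PowerSeries.X ^ 2 + PowerSeries.X) * U ^ 4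
      + U ^ 3 + (PowerSeries.X ^ 2 + 1) * U
      + PowerSeries.X ^ 2 + PowerSeries.X = 0 := by
  have hU : HasSubst U := HasSubst.of_constantCoeff_zero' hU0
  have hR_subst : substAlgHom hU R = X + 1 := by
    rw [show R = R₁ + 1 by rw [hR1, add_assoc, CharTwo.add_self_eq_zero, add_zero], map_add, map_one,
      coe_substAlgHom, ← comp_eq_subst _ hU0, hRU]
  have E := congrArg (substAlgHom hU) (hR ▸ rudinShapiro_functional_equation h2 h41 h43)
  simp only [map_add, map_mul, map_pow, map_one, map_zero, substAlgHom_X, hR_subst] at E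
  rw [pow_succ, CharTwo.add_pow_four, CharTwo.add_sq, one_pow, one_pow] at E
  linear_combination E - (1 + U ^ 4) * (CharTwo.two_eq_zero : (2 : (ZMod 2)⟦X⟧) = 0)

theorem rudin_shapiro_prime_inverse_equation
    (r : ℕ → ZMod 2) (h0 : r 0 = 1)
    (h2 : ∀ n, r (2 * n) = r n)
    (h41 : ∀ n, r (4 * n + 1) = r n)
    (h43 : ∀ n, r (4 * n + 3) = 1 + r (2 * n + 1))
    (R R₁ U : PowerSeries (ZMod 2))
    (hR : R = PowerSeries.mk r) (hR1 : R₁ = R + 1)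
    (hU0 : PowerSeries.constantCoeff U = 0)
    (hRU : PowerSeries.comp R₁ U = PowerSeries.X)
    (hUR : PowerSeries.comp U R₁ = PowerSeries.X) :
    (PowerSeries.X ^ 2 + 1) * U ^ 5 + (PowerSeries.X ^ 2 + PowerSeries.X) * U ^ 4
      + U ^ 3 + (PowerSeries.X ^ 2 + 1) * U
      + PowerSeries.X ^ 2 + PowerSeries.X = 0 :=
  rudin_shapiro_prime_inverse_equation_general r h2 h41 h43 R R₁ U hR hR1 hU0 hRU
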